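/- arXiv:2505.13203 — 7 statements merged into one kernel-verified Lean document; each statement's English description precedes it below -/
import Mathlib

section
/- For a zip datum Z = (E, G, τ, σ), there exists a largest subgroup E_∞ of E satisfying σ(E_∞) ⊆ τ(E_∞); namely, the subgroup generated by all subgroups F ⊆ E with σ(F) ⊆ τ(F) itself satisfies this property. -/
variable {E G : Type*} [Group E] [Group G]

/-- The conjugated homomorphism ˣσ : e ↦ x σ(e) x⁻¹. -/
def conjHom (x : G) (σ : E →* G) : E →* G :=
  ((MulAut.conj x).toMonoidHom).comp σ

/-- The first refinement group E₁ = σ⁻¹(τ(E)). -/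
def Eone (τ σ : E →* G) : Subgroup E :=
  Subgroup.comap σ (Subgroup.map τ ⊤)

/-- E₁ˣ = (ˣσ)⁻¹(τ(E)). -/
def EoneX (τ σ : E →* G) (x : G) : Subgroup E :=
  Eone τ (conjHom x σ)

/-- The iterated refinements Eᵢ. -/
def Eseq (τ σ : E →* G) : ℕ → Subgroup E
  | 0 => ⊤
  | n + 1 => Subgroup.comap σ (Subgroup.map τ (Eseq τ σ n))

/-- The iterated refinements Gᵢ. -/
def Gseq (τ σ : E →* G) : ℕ → Subgroup G
  | 0 => ⊤
  | n + 1 => Subgroup.map τ (Eseq τ σ n)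

/-- E∞: the largest subgroup F of E with σ(F) ⊆ τ(F). -/
def Einf (τ σ : E →* G) : Subgroup E :=
  sSup {F : Subgroup E | Subgroup.map σ F ≤ Subgroup.map τ F}

/-- G∞ = τ(E∞). -/
def Ginf (τ σ : E →* G) : Subgroup G :=
  Subgroup.map τ (Einf τ σ)

/-- E∞ˣ: the largest subgroup F of E with ˣσ(F) ⊆ τ(F). -/
def EinfX (τ σ : E →* G) (x : G) : Subgroup E :=
  Einf τ (conjHom x σ)

/-- G∞ˣ = τ(E∞ˣ). -/
def GinfX (τ σ : E →* G) (x : G) : Subgroup G :=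
  Subgroup.map τ (EinfX τ σ x)

/-- The ∼_Z-equivalence class of x : all τ(e) g x σ(e)⁻¹ with e ∈ E, g ∈ G∞ˣ. -/
def zipOrbit (τ σ : E →* G) (x : G) : Set G :=
  {y | ∃ e : E, ∃ g ∈ GinfX τ σ x, y = τ e * g * x * (σ e)⁻¹}
/-- there is a largest subgroup E∞ with σ(E∞) ⊆ τ(E∞): the subgroup
generated by all subgroups F with σ(F) ⊆ τ(F) itself has this property. -/
theorem zip_Einf_exists (τ σ : E →* G) :
    Subgroup.map σ (sSup {F : Subgroup E | Subgroup.map σ F ≤ Subgroup.map τ F}) ≤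
      Subgroup.map τ (sSup {F : Subgroup E | Subgroup.map σ F ≤ Subgroup.map τ F}) ∧
    ∀ F : Subgroup E, Subgroup.map σ F ≤ Subgroup.map τ F →
      F ≤ sSup {F : Subgroup E | Subgroup.map σ F ≤ Subgroup.map τ F} := by
  constructor
  · rw [sSup_eq_iSup']
    rw [(Subgroup.gc_map_comap σ).l_iSup]
    exact iSup_le fun F => F.2.trans (Subgroup.map_mono (le_iSup (fun i : {F : Subgroup E // Subgroup.map σ F ≤ Subgroup.map τ F} => (i : Subgroup E)) F))
  · exact fun F hF => le_sSup hF
end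

section
/- The groups E_∞ and G_∞ are invariant under refinement: for a zip datum Z = (E, G, τ, σ), we have E_∞(Z) = E_∞(Z_1) and G_∞(Z) = G_∞(Z_1), where Z_1 = (σ⁻¹(τ(E)), τ(E), τ, σ) is the refined zip datum. In particular E_∞ ⊆ E_i for all i ≥ 0. -/
variable {E G : Type*} [Group E] [Group G]

/-- E∞ and G∞ are invariant under refinement, and E∞ ⊆ Eᵢ for all i. -/
theorem zip_Einf_invariant_refinement (τ σ : E →* G) :
    Einf τ σ = sSup {F : Subgroup E | F ≤ Eone τ σ ∧ Subgroup.map σ F ≤ Subgroup.map τ F} ∧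
    Ginf τ σ =
      Subgroup.map τ
        (sSup {F : Subgroup E | F ≤ Eone τ σ ∧ Subgroup.map σ F ≤ Subgroup.map τ F}) ∧
    ∀ i : ℕ, Einf τ σ ≤ Eseq τ σ i := by
  have hset : {F : Subgroup E | Subgroup.map σ F ≤ Subgroup.map τ F} =
      {F : Subgroup E | F ≤ Eone τ σ ∧ Subgroup.map σ F ≤ Subgroup.map τ F} := by
    ext F
    simp only [Set.mem_setOf_eq]
    refine ⟨fun h => ⟨fun x hx => Subgroup.map_mono le_top (h ⟨x, hx, rfl⟩), h⟩, fun h => h.2⟩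
  have hEinf : Subgroup.map σ (Einf τ σ) ≤ Subgroup.map τ (Einf τ σ) := by
    rw [Einf, (Subgroup.gc_map_comap σ).l_sSup]
    exact iSup_le fun F => iSup_le fun hF =>
      le_trans hF (Subgroup.map_mono (le_sSup hF))
  refine ⟨by rw [Einf, hset], by rw [Ginf, Einf, hset], ?_⟩
  intro i
  induction i with
  | zero => exact le_top
  | succ n ih =>
    intro x hx
    show σ x ∈ Subgroup.map τ (Eseq τ σ n)
    exact Subgroup.map_mono ih (hEinf ⟨x, hx, rfl⟩)
end

section
/- Let Z = (E, G, τ, σ) be a zip datum with refinements E_i, G_i. If τ(⋂_i E_i) = ⋂_i τ(E_i), then E_∞ = ⋂_{i≥0} E_i and G_∞ = ⋂_{i≥0} G_i. -/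
variable {E G : Type*} [Group E] [Group G]

/-- if τ(⋂ᵢ Eᵢ) = ⋂ᵢ τ(Eᵢ), then E∞ = ⋂ᵢ Eᵢ and G∞ = ⋂ᵢ Gᵢ. -/
theorem zip_Einf_eq_iInf (τ σ : E →* G)
    (h : Subgroup.map τ (⨅ i : ℕ, Eseq τ σ i) = ⨅ i : ℕ, Subgroup.map τ (Eseq τ σ i)) :
    Einf τ σ = ⨅ i : ℕ, Eseq τ σ i ∧ Ginf τ σ = ⨅ i : ℕ, Gseq τ σ i := by
  set K : Subgroup E := ⨅ i : ℕ, Eseq τ σ i with hK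
  -- any F with σ(F) ≤ τ(F) is contained in each Eseq i
  have key : ∀ F : Subgroup E, Subgroup.map σ F ≤ Subgroup.map τ F →
      ∀ i : ℕ, F ≤ Eseq τ σ i := by
    intro F hF i
    induction i with
    | zero => exact le_top
    | succ n ih =>
      intro x hx
      have : σ x ∈ Subgroup.map τ (Eseq τ σ n) :=
        Subgroup.map_mono ih (hF (Subgroup.mem_map_of_mem σ hx))
      exact this
  have hle : Einf τ σ ≤ K := by
    apply sSup_le
    intro F hF
    exact le_iInf (key F hF)
  have hKmem : Subgroup.map σ K ≤ Subgroup.map τ K := by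
    rw [h]
    apply le_iInf
    intro i
    rintro _ ⟨x, hx, rfl⟩
    have : x ∈ Eseq τ σ (i + 1) := iInf_le (Eseq τ σ) (i + 1) hx
    exact this
  have hEinf : Einf τ σ = K := le_antisymm hle (le_sSup hKmem)
  refine ⟨hEinf, ?_⟩
  have hG : (⨅ i : ℕ, Subgroup.map τ (Eseq τ σ i)) = ⨅ i : ℕ, Gseq τ σ i := by
    apply le_antisymm
    · apply le_iInf
      intro i
      cases i with
      | zero => exact le_top
      | succ n => exact iInf_le _ n
    · apply le_iInf
      intro i
      exact iInf_le (Gseq τ σ) (i + 1)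
  rw [Ginf, hEinf, h, hG]
end

section
/- Let Z = (E, G, τ, σ) be a zip datum and x, y ∈ G with y ∈ G_1 = τ(E). Then E_1^{yx} = E_1^x, i.e. (σ conjugated by yx)⁻¹(τ(E)) = (σ conjugated by x)⁻¹(τ(E)); consequently Z_1^{yx} = (Z_1^x)^y and E_∞^{yx}(Z) = E_∞^y(Z_1^x), G_∞^{yx}(Z) = G_∞^y(Z_1^x). -/
variable {E G : Type*} [Group E] [Group G]

/-- for y ∈ G₁ = τ(E) we have E₁^{yx} = E₁ˣ, and
E∞^{yx}(Z) = E∞^y(Z₁ˣ), G∞^{yx}(Z) = G∞^y(Z₁ˣ). -/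
theorem zip_EinfX_multiplicative (τ σ : E →* G) (x y : G)
    (hy : y ∈ Subgroup.map τ (⊤ : Subgroup E)) :
    EoneX τ σ (y * x) = EoneX τ σ x ∧
    EinfX τ σ (y * x) =
      sSup {F : Subgroup E | F ≤ EoneX τ σ x ∧
        Subgroup.map (conjHom (y * x) σ) F ≤ Subgroup.map τ F} ∧
    GinfX τ σ (y * x) =
      Subgroup.map τ
        (sSup {F : Subgroup E | F ≤ EoneX τ σ x ∧
          Subgroup.map (conjHom (y * x) σ) F ≤ Subgroup.map τ F}) := by
  obtain ⟨e0, -, he0⟩ := hy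
  have h1 : EoneX τ σ (y * x) = EoneX τ σ x := by
    ext e
    simp only [EoneX, Eone, conjHom, Subgroup.mem_comap, MonoidHom.comp_apply,
      MulEquiv.coe_toMonoidHom, MulAut.conj_apply, Subgroup.mem_map, Subgroup.mem_top,
      true_and]
    constructor
    · rintro ⟨f, hf⟩
      refine ⟨e0⁻¹ * f * e0, ?_⟩
      rw [map_mul, map_mul, map_inv, he0, hf]
      group
    · rintro ⟨f, hf⟩
      refine ⟨e0 * f * e0⁻¹, ?_⟩
      rw [map_mul, map_mul, map_inv, he0, hf]
      group
  have hset : {F : Subgroup E | Subgroup.map (conjHom (y * x) σ) F ≤ Subgroup.map τ F}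
      = {F : Subgroup E | F ≤ EoneX τ σ x ∧
        Subgroup.map (conjHom (y * x) σ) F ≤ Subgroup.map τ F} := by
    ext F
    simp only [Set.mem_setOf_eq]
    constructor
    · intro hF
      refine ⟨?_, hF⟩
      rw [← h1]
      intro e he
      simp only [EoneX, Eone, Subgroup.mem_comap]
      exact Subgroup.map_mono le_top (hF (Subgroup.mem_map_of_mem _ he))
    · exact fun h => h.2
  have h2 : EinfX τ σ (y * x) =
      sSup {F : Subgroup E | F ≤ EoneX τ σ x ∧
        Subgroup.map (conjHom (y * x) σ) F ≤ Subgroup.map τ F} := by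
    rw [EinfX, Einf, hset]
  exact ⟨h1, h2, by rw [GinfX, h2]⟩
end

section
/- For a zip datum Z = (E, G, τ, σ), the relation on G defined by y ∼ x iff there exist e ∈ E and g_x ∈ G_∞^x with y = τ(e) g_x x σ(e)⁻¹ is an equivalence relation. -/
variable {E G : Type*} [Group E] [Group G]

lemma einf_spec (τ σ : E →* G) :
    Subgroup.map σ (Einf τ σ) ≤ Subgroup.map τ (Einf τ σ) := by
  rw [Einf, (Subgroup.gc_map_comap σ).l_sSup]
  exact iSup₂_le fun F hF => le_trans hF (Subgroup.map_mono (le_sSup hF))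

lemma key_mem (τ σ : E →* G) {x : G} (e : E) {g : G} (hg : g ∈ GinfX τ σ x)
    {a : E} (ha : a ∈ EinfX τ σ x) :
    e * a * e⁻¹ ∈ EinfX τ σ (τ e * g * x * (σ e)⁻¹) := by
  set y := τ e * g * x * (σ e)⁻¹ with hy
  set F' : Subgroup E := Subgroup.map (MulAut.conj e).toMonoidHom (EinfX τ σ x) with hF'
  have hmem : F' ∈ {F : Subgroup E | Subgroup.map (conjHom y σ) F ≤ Subgroup.map τ F} := by
    rintro b ⟨-, ⟨a', ha', rfl⟩, rfl⟩
    -- b = conjHom y σ (e * a' * e⁻¹)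
    obtain ⟨c, hc, hcg⟩ := hg
    have hx : conjHom x σ a' ∈ Subgroup.map τ (EinfX τ σ x) :=
      einf_spec τ (conjHom x σ) ⟨a', ha', rfl⟩
    obtain ⟨b', hb', hbx⟩ := hx
    refine ⟨e * (c * b' * c⁻¹) * e⁻¹, ⟨c * b' * c⁻¹, mul_mem (mul_mem hc hb') (inv_mem hc), rfl⟩, ?_⟩
    show τ (e * (c * b' * c⁻¹) * e⁻¹) = conjHom y σ ((MulAut.conj e).toMonoidHom a')
    have h1 : conjHom y σ ((MulAut.conj e).toMonoidHom a') = y * (σ e * σ a' * (σ e)⁻¹) * y⁻¹ := by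
      simp [conjHom, map_mul]
    have h2 : x * σ a' * x⁻¹ = τ b' := by
      rw [hbx]; simp [conjHom]
    rw [h1, hy]
    simp only [map_mul, map_inv, ← hcg, ← h2]
    group
  have hle : F' ≤ EinfX τ σ y := le_sSup hmem
  exact hle ⟨a, ha, rfl⟩

lemma ginf_conj (τ σ : E →* G) {x : G} (e : E) {g : G} (hg : g ∈ GinfX τ σ x)
    {t : G} (ht : t ∈ GinfX τ σ x) :
    τ e * t * (τ e)⁻¹ ∈ GinfX τ σ (τ e * g * x * (σ e)⁻¹) := by
  obtain ⟨a, ha, rfl⟩ := ht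
  exact ⟨e * a * e⁻¹, key_mem τ σ e hg ha, by simp [map_mul]⟩

/-- the zip relation is an equivalence relation. -/
theorem zip_rel_equivalence (τ σ : E →* G) :
    Equivalence (fun y x : G => ∃ e : E, ∃ g ∈ GinfX τ σ x, y = τ e * g * x * (σ e)⁻¹) := by
  constructor
  · intro x
    exact ⟨1, 1, one_mem _, by simp⟩
  · rintro y x ⟨e, g, hg, rfl⟩
    refine ⟨e⁻¹, τ e * g⁻¹ * (τ e)⁻¹, ginf_conj τ σ e hg (inv_mem hg), ?_⟩
    simp only [map_inv]
    group
  · rintro a b c ⟨e, g, hg, rfl⟩ ⟨f, h, hh, rfl⟩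
    have hsym : τ f * h⁻¹ * (τ f)⁻¹ ∈ GinfX τ σ (τ f * h * c * (σ f)⁻¹) :=
      ginf_conj τ σ f hh (inv_mem hh)
    have hc : c = τ f⁻¹ * (τ f * h⁻¹ * (τ f)⁻¹) * (τ f * h * c * (σ f)⁻¹) * (σ f⁻¹)⁻¹ := by
      simp only [map_inv]; group
    have hg' : (τ f)⁻¹ * g * τ f ∈ GinfX τ σ c := by
      have := ginf_conj τ σ f⁻¹ hsym hg
      rw [← hc] at this
      simpa [map_inv] using this
    refine ⟨e * f, ((τ f)⁻¹ * g * τ f) * h, mul_mem hg' hh, ?_⟩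
    simp only [map_mul]
    group
end

section
/- Let Z = (E, G, τ, σ) be a zip datum, x, y ∈ G, e ∈ E and g_x ∈ G_∞^x with y = τ(e) g_x x σ(e)⁻¹. Then e E_∞^x e⁻¹ = E_∞^y. -/
variable {E G : Type*} [Group E] [Group G]

lemma conj_le (τ σ : E →* G) (x y : G) (e : E) (gx : G)
    (hgx : gx ∈ GinfX τ σ x) (h : y = τ e * gx * x * (σ e)⁻¹) :
    Subgroup.map ((MulAut.conj e).toMonoidHom) (EinfX τ σ x) ≤ EinfX τ σ y := by
  apply le_sSup
  rintro _ ⟨_, ⟨a, ha, rfl⟩, rfl⟩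
  obtain ⟨b, hb, hbe⟩ := einf_spec τ (conjHom x σ) ⟨a, ha, rfl⟩
  obtain ⟨c, hc, hce⟩ := hgx
  refine ⟨(MulAut.conj e) (c * b * c⁻¹), ⟨c * b * c⁻¹, mul_mem (mul_mem hc hb) (inv_mem hc), rfl⟩, ?_⟩
  simp only [conjHom, MonoidHom.comp_apply, MulEquiv.coe_toMonoidHom, MulAut.conj_apply,
    map_mul, map_inv] at *
  rw [hbe, hce, h]
  group

lemma conj_inv_cancel (e : E) (K : Subgroup E) :
    Subgroup.map ((MulAut.conj e).toMonoidHom)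
      (Subgroup.map ((MulAut.conj e⁻¹).toMonoidHom) K) = K := by
  rw [Subgroup.map_map]
  have : ((MulAut.conj e).toMonoidHom).comp ((MulAut.conj e⁻¹).toMonoidHom) = MonoidHom.id E := by
    ext z; simp [mul_assoc]
  rw [this, Subgroup.map_id]

/-- if y = τ(e) gₓ x σ(e)⁻¹ with gₓ ∈ G∞ˣ, then e E∞ˣ e⁻¹ = E∞ʸ. -/
theorem zip_EinfX_conj_of_rel (τ σ : E →* G) (x y : G) (e : E) (gx : G)
    (hgx : gx ∈ GinfX τ σ x) (h : y = τ e * gx * x * (σ e)⁻¹) :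
    Subgroup.map ((MulAut.conj e).toMonoidHom) (EinfX τ σ x) = EinfX τ σ y := by
  exact le_antisymm (conj_le τ σ x y e gx hgx h) (by
    obtain ⟨c, hc, hce⟩ := inv_mem hgx
    have hgy : τ e * gx⁻¹ * (τ e)⁻¹ ∈ GinfX τ σ y := by
      refine ⟨(MulAut.conj e) c, conj_le τ σ x y e gx hgx h ⟨c, hc, rfl⟩, ?_⟩
      simp [MulAut.conj_apply, hce]
    have hx : x = τ e⁻¹ * (τ e * gx⁻¹ * (τ e)⁻¹) * y * (σ e⁻¹)⁻¹ := by
      rw [h]; simp only [map_inv]; group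
    have := conj_le τ σ y x e⁻¹ _ hgy hx
    calc EinfX τ σ y
        = Subgroup.map ((MulAut.conj e).toMonoidHom)
            (Subgroup.map ((MulAut.conj e⁻¹).toMonoidHom) (EinfX τ σ y)) :=
          (conj_inv_cancel e _).symm
      _ ≤ Subgroup.map ((MulAut.conj e).toMonoidHom) (EinfX τ σ x) :=
          Subgroup.map_mono this)
end

section
/- Let Z = (E, G, τ, σ) be a zip datum. Then E_∞ = {e ∈ E : σ(e) ∈ G_∞ τ(e) G_∞}. -/
variable {E G : Type*} [Group E] [Group G]

lemma map_Einf_le (τ σ : E →* G) : Subgroup.map σ (Einf τ σ) ≤ Ginf τ σ := by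
  rw [Ginf, Einf, Subgroup.map_le_iff_le_comap]
  apply sSup_le
  intro F hF
  refine le_trans (Subgroup.map_le_iff_le_comap.mp hF) (Subgroup.comap_mono ?_)
  exact Subgroup.map_mono (le_sSup hF)
/-- E∞ = {e ∈ E : σ(e) ∈ G∞ τ(e) G∞}. -/
theorem zip_Einf_description (τ σ : E →* G) :
    ∀ e : E, e ∈ Einf τ σ ↔
      ∃ g₁ ∈ Ginf τ σ, ∃ g₂ ∈ Ginf τ σ, σ e = g₁ * τ e * g₂ := by
  intro e
  constructor
  · intro he
    refine ⟨σ e * (τ e)⁻¹, ?_, 1, one_mem _, by group⟩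
    exact mul_mem (map_Einf_le τ σ ⟨e, he, rfl⟩) (inv_mem ⟨e, he, rfl⟩)
  · rintro ⟨g₁, hg₁, g₂, hg₂, heq⟩
    set F := Einf τ σ ⊔ Subgroup.closure {e} with hF
    have heF : e ∈ F := (le_sup_right : Subgroup.closure {e} ≤ F) (Subgroup.subset_closure rfl)
    have hmap : Subgroup.map σ F ≤ Subgroup.map τ F := by
      rw [hF, Subgroup.map_sup]
      apply sup_le
      · exact (map_Einf_le τ σ).trans (Subgroup.map_mono le_sup_left)
      · rw [MonoidHom.map_closure, Subgroup.closure_le, Set.image_singleton,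
          Set.singleton_subset_iff]
        have hG : Ginf τ σ ≤ Subgroup.map τ F := Subgroup.map_mono le_sup_left
        have : σ e = g₁ * τ e * g₂ := heq
        rw [this]
        exact mul_mem (mul_mem (hG hg₁) ⟨e, heF, rfl⟩) (hG hg₂)
    have : F ≤ Einf τ σ := le_sSup hmap
    exact this heF
end
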